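/- Let x and y be nonzero real numbers. If (r₁, r₂, r₃, r₄) is a planar non-collinear central configuration with multiplier ξ ≠ 0 for the masses (x, −x, y, −y), then the relabeled configuration (r₂, r₁, r₄, r₃) is also a planar non-collinear central configuration with a nonzero multiplier for the masses (x, −x, y, −y), and the labeled configurations (r₁, r₂, r₃, r₄) and (r₂, r₁, r₄, r₃) are not similar to each other. -/
import Mathlib

open RealInnerProductSpace


/-- The gravitational acceleration of body `i` in a planar `N`-body configuration
with masses `m` and positions `r`. -/
noncomputable def accel {N : ℕ} (m : Fin N → ℝ) (r : Fin N → EuclideanSpace ℝ (Fin 2))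
    (i : Fin N) : EuclideanSpace ℝ (Fin 2) :=
  ∑ j ∈ Finset.univ.erase i, (m j / ‖r j - r i‖ ^ 3) • (r j - r i)

/-- The configuration is central with multiplier `ξ`:
`γ_j - γ_i = ξ • (r_j - r_i)` for all `i`, `j`. -/
def IsCentral {N : ℕ} (m : Fin N → ℝ) (r : Fin N → EuclideanSpace ℝ (Fin 2)) (ξ : ℝ) : Prop :=
  ∀ i j, accel m r j - accel m r i = ξ • (r j - r i)

/-- A similarity transformation of the plane: a map multiplying all distances by a
fixed positive factor. -/
def IsSimilarity (S : EuclideanSpace ℝ (Fin 2) → EuclideanSpace ℝ (Fin 2)) : Prop :=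
  ∃ c : ℝ, 0 < c ∧ ∀ p q, dist (S p) (S q) = c * dist p q

/-- Two labeled four-body configurations are similar if some similarity of the plane
carries one to the other, preserving labels. -/
def SimilarConfig (r r' : Fin 4 → EuclideanSpace ℝ (Fin 2)) : Prop :=
  ∃ S, IsSimilarity S ∧ ∀ i, S (r i) = r' i

/-- A planar non-collinear central configuration with some nonzero multiplier for the
masses x, -x, y, -y. -/
def IsNonzeroMultConfig (x y : ℝ) (r : Fin 4 → EuclideanSpace ℝ (Fin 2)) : Prop :=
  Function.Injective r ∧ ¬ Collinear ℝ (Set.range r) ∧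
    ∃ ξ : ℝ, ξ ≠ 0 ∧ IsCentral ![x, -x, y, -y] r ξ

lemma accel_eq_sum {N : ℕ} (m : Fin N → ℝ) (r : Fin N → EuclideanSpace ℝ (Fin 2)) (i : Fin N) :
    accel m r i = ∑ j, (m j / ‖r j - r i‖ ^ 3) • (r j - r i) := by
  rw [accel]; exact Finset.sum_erase _ (by simp)

lemma accel_swap (x y : ℝ) (r : Fin 4 → EuclideanSpace ℝ (Fin 2)) (i : Fin 4) :
    accel ![x,-x,y,-y] ![r 1, r 0, r 3, r 2] i
      = - accel ![x,-x,y,-y] r (![1,0,3,2] i) := by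
  fin_cases i <;>
  · rw [accel_eq_sum, accel_eq_sum, Fin.sum_univ_four, Fin.sum_univ_four]
    simp [neg_div, norm_sub_rev (r 0) (r 1), norm_sub_rev (r 0) (r 2),
      norm_sub_rev (r 0) (r 3), norm_sub_rev (r 1) (r 2), norm_sub_rev (r 1) (r 3),
      norm_sub_rev (r 2) (r 3)]
    module

/-- The scalar equation obtained by taking the inner product of the centrality
equation for the pair `(0, 1)` with `r 1 - r 0`. -/
lemma central_scalar (x y ξ : ℝ) (r : Fin 4 → EuclideanSpace ℝ (Fin 2))
    (hcen : IsCentral ![x, -x, y, -y] r ξ) :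
    x/‖r 1 - r 0‖^3 * (-(‖r 1 - r 0‖^2))
      + y/‖(r 2 - r 0) - (r 1 - r 0)‖^3 * (⟪r 2 - r 0, r 1 - r 0⟫ - ‖r 1 - r 0‖^2)
      + (-y)/‖(r 3 - r 0) - (r 1 - r 0)‖^3 * (⟪r 3 - r 0, r 1 - r 0⟫ - ‖r 1 - r 0‖^2)
      - ((-x)/‖r 1 - r 0‖^3 * ‖r 1 - r 0‖^2 + y/‖r 2 - r 0‖^3 * ⟪r 2 - r 0, r 1 - r 0⟫
        + (-y)/‖r 3 - r 0‖^3 * ⟪r 3 - r 0, r 1 - r 0⟫)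
      = ξ * ‖r 1 - r 0‖^2 := by
  have h1 : accel ![x,-x,y,-y] r 1
      = (x/‖r 1 - r 0‖^3) • (-(r 1 - r 0))
        + (y/‖(r 2 - r 0) - (r 1 - r 0)‖^3) • ((r 2 - r 0) - (r 1 - r 0))
        + ((-y)/‖(r 3 - r 0) - (r 1 - r 0)‖^3) • ((r 3 - r 0) - (r 1 - r 0)) := by
    rw [accel_eq_sum, Fin.sum_univ_four,
      show r 0 - r 1 = -(r 1 - r 0) by abel, show r 2 - r 1 = (r 2 - r 0) - (r 1 - r 0) by abel,
      show r 3 - r 1 = (r 3 - r 0) - (r 1 - r 0) by abel]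
    simp only [Matrix.cons_val_zero, Matrix.cons_val_one, Matrix.head_cons,
      Matrix.cons_val_two, Matrix.tail_cons, Matrix.cons_val_three, sub_self, smul_zero,
      add_zero, zero_add, norm_neg]
  have h0 : accel ![x,-x,y,-y] r 0
      = ((-x)/‖r 1 - r 0‖^3) • (r 1 - r 0)
        + (y/‖r 2 - r 0‖^3) • (r 2 - r 0)
        + ((-y)/‖r 3 - r 0‖^3) • (r 3 - r 0) := by
    rw [accel_eq_sum, Fin.sum_univ_four]
    simp only [Matrix.cons_val_zero, Matrix.cons_val_one, Matrix.head_cons,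
      Matrix.cons_val_two, Matrix.tail_cons, Matrix.cons_val_three, sub_self, smul_zero,
      add_zero, zero_add]
  have key := congrArg (fun w : EuclideanSpace ℝ (Fin 2) => ⟪w, r 1 - r 0⟫) (hcen 0 1)
  rw [h1, h0] at key
  simp only [inner_add_left, inner_sub_left, inner_neg_left, real_inner_smul_left] at key
  rw [show ‖r 1 - r 0‖^2 = ⟪r 1, r 1 - r 0⟫ - ⟪r 0, r 1 - r 0⟫ by
        rw [← inner_sub_left, real_inner_self_eq_norm_sq],
      show ⟪r 2 - r 0, r 1 - r 0⟫ = ⟪r 2, r 1 - r 0⟫ - ⟪r 0, r 1 - r 0⟫ from inner_sub_left _ _ _,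
      show ⟪r 3 - r 0, r 1 - r 0⟫ = ⟪r 3, r 1 - r 0⟫ - ⟪r 0, r 1 - r 0⟫ from inner_sub_left _ _ _]
  linear_combination key

lemma swap_arith (x y ξ s a2 a3 b2 b3 i2 i3 : ℝ)
    (hs : 0 < s) (hb2 : 0 < b2) (hb3 : 0 < b3)
    (e2 : b2^2 = a2^2 - 2*i2 + s^2) (e3 : b3^2 = a3^2 - 2*i3 + s^2)
    (c2 : a2 = b3) (c3 : a3 = b2)
    (key : x/s^3 * (-(s^2)) + y/b2^3*(i2 - s^2) + (-y)/b3^3*(i3 - s^2)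
      - ((-x)/s^3 * s^2 + y/a2^3*i2 + (-y)/a3^3*i3) = ξ * s^2) : ξ = 0 := by
  subst c2 c3
  have hi3 : i3 = s^2 - i2 := by linarith
  rw [hi3] at key
  have h0 : ξ * s^2 = 0 := by
    rw [← key]; field_simp; ring
  nlinarith [sq_nonneg s, mul_pos hs hs]

/-- If (r₁, r₂, r₃, r₄) is a planar non-collinear central configuration with nonzero
multiplier for the masses x, -x, y, -y, then so is the relabeled configuration
(r₂, r₁, r₄, r₃), and the two labeled configurations are not similar. -/
theorem central_config_nonzero_multiplier_swap
    (x y : ℝ) (hx : x ≠ 0) (hy : y ≠ 0)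
    (r : Fin 4 → EuclideanSpace ℝ (Fin 2))
    (h : IsNonzeroMultConfig x y r) :
    IsNonzeroMultConfig x y ![r 1, r 0, r 3, r 2] ∧
    ¬ SimilarConfig r ![r 1, r 0, r 3, r 2] := by
  obtain ⟨hinj, hncol, ξ, hξ, hcen⟩ := h
  constructor
  · -- the swapped configuration is central with multiplier `-ξ`
    have hcomp : (![r 1, r 0, r 3, r 2] : Fin 4 → EuclideanSpace ℝ (Fin 2))
        = r ∘ ![1,0,3,2] := by
      funext i; fin_cases i <;> rfl
    have hσ : Function.Bijective (![1,0,3,2] : Fin 4 → Fin 4) := by decide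
    refine ⟨?_, ?_, -ξ, neg_ne_zero.mpr hξ, ?_⟩
    · rw [hcomp]; exact hinj.comp hσ.injective
    · rw [hcomp, Set.range_comp, Set.range_eq_univ.mpr hσ.surjective, Set.image_univ]
      exact hncol
    · intro i j
      have e : ∀ k : Fin 4, (![r 1, r 0, r 3, r 2] : Fin 4 → EuclideanSpace ℝ (Fin 2)) k
          = r (![1,0,3,2] k) := by intro k; fin_cases k <;> rfl
      rw [accel_swap, accel_swap, e i, e j, neg_sub_neg,
        hcen (![1,0,3,2] j) (![1,0,3,2] i)]
      module
  · -- not similar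
    rintro ⟨S, ⟨c, hc0, hdist⟩, hS⟩
    have hS0 : S (r 0) = r 1 := hS 0
    have hS1 : S (r 1) = r 0 := hS 1
    have hS2 : S (r 2) = r 3 := hS 2
    have hS3 : S (r 3) = r 2 := hS 3
    have hne01 : r 0 ≠ r 1 := hinj.ne (by decide)
    have hd01 : dist (r 0) (r 1) ≠ 0 := dist_ne_zero.mpr hne01
    have hc1 : c = 1 := by
      have h' := hdist (r 0) (r 1)
      rw [hS0, hS1, dist_comm (r 1) (r 0)] at h'
      exact mul_right_cancel₀ hd01 (by linarith : c * dist (r 0) (r 1) = 1 * dist (r 0) (r 1))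
    have h02 : dist (r 1) (r 3) = dist (r 0) (r 2) := by
      have := hdist (r 0) (r 2); rw [hS0, hS2, hc1, one_mul] at this; exact this
    have h03 : dist (r 1) (r 2) = dist (r 0) (r 3) := by
      have := hdist (r 0) (r 3); rw [hS0, hS3, hc1, one_mul] at this; exact this
    -- translate into norm equalities
    have c2 : ‖r 2 - r 0‖ = ‖(r 3 - r 0) - (r 1 - r 0)‖ := by
      rw [show (r 3 - r 0) - (r 1 - r 0) = -(r 1 - r 3) by abel, norm_neg, ← dist_eq_norm,
        ← dist_eq_norm, h02, dist_comm]
    have c3 : ‖r 3 - r 0‖ = ‖(r 2 - r 0) - (r 1 - r 0)‖ := by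
      rw [show (r 2 - r 0) - (r 1 - r 0) = -(r 1 - r 2) by abel, norm_neg, ← dist_eq_norm,
        ← dist_eq_norm, h03, dist_comm]
    have hs : (0:ℝ) < ‖r 1 - r 0‖ :=
      norm_pos_iff.mpr (sub_ne_zero.mpr (hinj.ne (by decide)))
    have hb2 : (0:ℝ) < ‖(r 2 - r 0) - (r 1 - r 0)‖ := by
      rw [show (r 2 - r 0) - (r 1 - r 0) = r 2 - r 1 by abel]
      exact norm_pos_iff.mpr (sub_ne_zero.mpr (hinj.ne (by decide)))
    have hb3 : (0:ℝ) < ‖(r 3 - r 0) - (r 1 - r 0)‖ := by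
      rw [show (r 3 - r 0) - (r 1 - r 0) = r 3 - r 1 by abel]
      exact norm_pos_iff.mpr (sub_ne_zero.mpr (hinj.ne (by decide)))
    exact hξ (swap_arith x y ξ ‖r 1 - r 0‖ ‖r 2 - r 0‖ ‖r 3 - r 0‖
      ‖(r 2 - r 0) - (r 1 - r 0)‖ ‖(r 3 - r 0) - (r 1 - r 0)‖
      ⟪r 2 - r 0, r 1 - r 0⟫ ⟪r 3 - r 0, r 1 - r 0⟫
      hs hb2 hb3 (norm_sub_sq_real _ _) (norm_sub_sq_real _ _) c2 c3
      (central_scalar x y ξ r hcen))
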